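/- Let n ≥ 3, let G = D_{2n} = ⟨a, b | a^n = b^2 = 1, bab = a^{-1}⟩, and let i be an integer with 2 ≤ i ≤ n-1, gcd(2i-1, n) = 1 and n dividing 2i(i-1). Set C = {b, ba, ba^i, ba^{1-i}} (exponents read modulo n). Then |C| = 4, C is a transitive inverse-closed generating set of G on which Aut(G;C) acts transitively, and: if n ≡ 0 (mod 4) and i ∈ {n/2, n/2+1}, then Aut(G;C) = ⟨τ_{n/2+1}, τ_{n-1}φ⟩ is isomorphic to the dihedral group of order 8; otherwise Aut(G;C) = ⟨τ_{n-1}φ, τ_{2i-1}φ^{1-i}⟩ is isomorphic to Z_2 × Z_2. -/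

import Mathlib

/-!
An automorphism of `D_{2n}` preserving `C` sends the reflections `b` and `ba` to reflections, so
it is some `τ_k φ^m` and acts on the exponents `{0, 1, i, 1 - i}` of `C` by `v ↦ k v + m`.
Since `2i(i - 1) ≡ 0`, the automorphisms `1`, `τ_{-1} φ`, `τ_{2i-1} φ^{1-i}` and their product
preserve `C` and act regularly on it, so `Aut(G;C)` is this Klein four-group extended by the
stabiliser of `b`. The stabiliser consists of multiplications by some `k ∈ {1, i, 1 - i}`, and
`k = i` or `k = 1 - i` preserves the exponents only if `k² = 1`, which happens exactly when
`4 ∣ n` and `i ∈ {n/2, n/2 + 1}`. In that case `Aut(G;C)` is generated by the involutions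
`τ_{n/2+1}` and `τ_{-1} φ`, whose product has order 4, so it is dihedral of order 8.
-/

namespace NETCayley

variable {G : Type*} [Group G]

/-- `Aut(G;C)`: the subgroup of `MulAut G` consisting of automorphisms `σ` with `C^σ = C`. -/
def autSub (C : Set G) : Subgroup (MulAut G) where
  carrier := {σ : MulAut G | ⇑σ '' C = C}
  one_mem' := by simp
  mul_mem' := by
    intro a b ha hb
    rw [Set.mem_setOf_eq] at ha hb ⊢
    have h : ⇑(a * b) = ⇑a ∘ ⇑b := rfl
    rw [h, Set.image_comp, hb, ha]
  inv_mem' := by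
    intro a ha
    rw [Set.mem_setOf_eq] at ha ⊢
    conv_lhs => rw [← ha]
    rw [← Set.image_comp]
    have h : ⇑a⁻¹ ∘ ⇑a = id := by funext x; simp
    rw [h, Set.image_id]

/-- `A(G;C)`: proper normal `Aut(G;C)`-invariant subgroups of `G`. -/
def setA (C : Set G) : Set (Subgroup G) :=
  {N | N.Normal ∧ N ≠ ⊤ ∧ ∀ σ ∈ autSub C, N.map (σ : MulAut G).toMonoidHom = N}

/-- `A_max(G;C)`: maximal (by inclusion) elements of `A(G;C)`. -/
def setAmax (C : Set G) : Set (Subgroup G) :=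
  {N | N ∈ setA C ∧ ∀ M ∈ setA C, N ≤ M → N = M}

/-- `Φ(G;C)`: the intersection of all members of `A_max(G;C)`. -/
def PhiC (C : Set G) : Subgroup G := sInf (setAmax C)

/-- `X` is normal `C`-closed: `(x^g)^σ ∈ X` for all `x ∈ X`, `g ∈ G`, `σ ∈ Aut(G;C)`. -/
def NormalCClosed (C X : Set G) : Prop :=
  ∀ x ∈ X, ∀ g : G, ∀ σ ∈ autSub C, σ (g⁻¹ * x * g) ∈ X

/-- The normal `C`-closure of `X`: `{(x^g)^σ : x ∈ X, g ∈ G, σ ∈ Aut(G;C)}`. -/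
def normalCClosure (C X : Set G) : Set G :=
  {y | ∃ x ∈ X, ∃ g : G, ∃ σ ∈ autSub C, σ (g⁻¹ * x * g) = y}

/-- The orbit of `c` under the natural action of `Aut(G;C)`. -/
def orbitC (C : Set G) (c : G) : Set G := {y | ∃ σ ∈ autSub C, σ c = y}

/-- `C` is a transitive set: either `Aut(G;C)` is transitive on `C`, or there are exactly two
orbits `C₊`, `C₋` on `C` with `C = C₊ ∪ C₋` and `C₋ = C₊⁻¹`. -/
def TransSet (C : Set G) : Prop :=
  (∀ c ∈ C, ∀ c' ∈ C, ∃ σ ∈ autSub C, σ c = c') ∨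
  (∃ cp ∈ C, ∃ cm ∈ C, orbitC C cp ≠ orbitC C cm ∧
    C = orbitC C cp ∪ orbitC C cm ∧ orbitC C cm = (orbitC C cp)⁻¹)

/-- A transitive inverse-closed generating set of `G`. -/
def IsTransGenSet (C : Set G) : Prop :=
  (1 : G) ∉ C ∧ (∀ c ∈ C, c⁻¹ ∈ C) ∧ Subgroup.closure C = ⊤ ∧ TransSet C

/-- The map underlying the automorphism `τ_k φ^m` of the dihedral group:
`a^i ↦ a^{ki}`, `b a^i ↦ b a^{ki+m}`. -/
def dihMap (n : ℕ) (k m : ZMod n) : DihedralGroup n → DihedralGroup n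
  | .r i => .r (k * i)
  | .sr i => .sr (k * i + m)

/-- The automorphism `τ_k φ^m` of the dihedral group (for `k` a unit mod `n`). -/
def dihAut (n : ℕ) (k : (ZMod n)ˣ) (m : ZMod n) : MulAut (DihedralGroup n) where
  toFun := dihMap n (k : ZMod n) m
  invFun := dihMap n ((k⁻¹ : (ZMod n)ˣ) : ZMod n) (-(((k⁻¹ : (ZMod n)ˣ) : ZMod n) * m))
  left_inv := by
    have hk : ((k⁻¹ : (ZMod n)ˣ) : ZMod n) * ((k : (ZMod n)ˣ) : ZMod n) = 1 := k.inv_mul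
    rintro (i | i) <;> simp only [dihMap] <;> congr 1 <;> linear_combination (i : ZMod n) * hk
  right_inv := by
    have hk : ((k : (ZMod n)ˣ) : ZMod n) * ((k⁻¹ : (ZMod n)ˣ) : ZMod n) = 1 := k.mul_inv
    rintro (i | i) <;> simp only [dihMap] <;> congr 1
    · linear_combination (i : ZMod n) * hk
    · linear_combination ((i : ZMod n) - m) * hk
  map_mul' := by
    rintro (i | i) (j | j) <;>
      simp only [DihedralGroup.r_mul_r, DihedralGroup.r_mul_sr, DihedralGroup.sr_mul_r,
        DihedralGroup.sr_mul_sr, dihMap] <;> congr 1 <;> ring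


theorem mem_autSub {C : Set G} {σ : MulAut G} : σ ∈ autSub C ↔ ⇑σ '' C = C := Iff.rfl

theorem apply_mem_of_mem_autSub {C : Set G} {σ : MulAut G} (hσ : σ ∈ autSub C) {c : G}
    (hc : c ∈ C) : σ c ∈ C :=
  mem_autSub.mp hσ ▸ Set.mem_image_of_mem σ hc

theorem mem_autSub_of_mapsTo {C : Set G} (hC : C.Finite) {σ : MulAut G}
    (h : Set.MapsTo σ C C) : σ ∈ autSub C :=
  Set.eq_of_subset_of_ncard_le h.image_subset
    (Set.ncard_image_of_injective C σ.injective).ge hC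

theorem exists_mem_autSub_apply_eq {C : Set G} {c₀ : G}
    (h : ∀ c ∈ C, ∃ ρ ∈ autSub C, ρ c₀ = c) :
    ∀ c ∈ C, ∀ c' ∈ C, ∃ σ ∈ autSub C, σ c = c' := by
  intro c hc c' hc'
  obtain ⟨ρ, hρ, rfl⟩ := h c hc
  obtain ⟨ρ', hρ', rfl⟩ := h c' hc'
  exact ⟨ρ' * ρ⁻¹, mul_mem hρ' (inv_mem hρ), by simp⟩

theorem autSub_eq_of_stabilizer_le {C : Set G} {c₀ : G} (hc₀ : c₀ ∈ C)
    {L : Subgroup (MulAut G)} (hL : L ≤ autSub C) (htrans : ∀ c ∈ C, ∃ ρ ∈ L, ρ c₀ = c)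
    (hstab : ∀ σ ∈ autSub C, σ c₀ = c₀ → σ ∈ L) : autSub C = L := by
  refine le_antisymm (fun σ hσ => ?_) hL
  obtain ⟨ρ, hρ, hρc₀⟩ := htrans _ (apply_mem_of_mem_autSub hσ hc₀)
  have hρσ : ρ⁻¹ * σ ∈ L :=
    hstab _ (mul_mem (inv_mem (hL hρ)) hσ) (by simp [MulAut.mul_apply, ← hρc₀])
  simpa using mul_mem hρ hρσ

open DihedralGroup

section DihedralAut

variable {n : ℕ}

@[simp]
theorem dihAut_apply_r (k : (ZMod n)ˣ) (m j : ZMod n) :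
    dihAut n k m (r j) = r ((k : ZMod n) * j) := rfl

@[simp]
theorem dihAut_apply_sr (k : (ZMod n)ˣ) (m j : ZMod n) :
    dihAut n k m (sr j) = sr ((k : ZMod n) * j + m) := rfl

theorem dihAut_mul (k k' : (ZMod n)ˣ) (m m' : ZMod n) :
    dihAut n k m * dihAut n k' m' = dihAut n (k * k') (k * m' + m) := by
  ext (j | j) <;> simp only [MulAut.mul_apply, dihAut_apply_r, dihAut_apply_sr, Units.val_mul,
    r.injEq, sr.injEq] <;> ring

theorem dihAut_eq_dihAut_iff {k k' : (ZMod n)ˣ} {m m' : ZMod n} :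
    dihAut n k m = dihAut n k' m' ↔ (k : ZMod n) = k' ∧ m = m' := by
  refine ⟨fun h => ?_, fun ⟨hk, hm⟩ => by rw [Units.val_inj.mp hk, hm]⟩
  have h1 : dihAut n k m (r 1) = dihAut n k' m' (r 1) := by rw [h]
  have h0 : dihAut n k m (sr 0) = dihAut n k' m' (sr 0) := by rw [h]
  simp only [dihAut_apply_r, dihAut_apply_sr, r.injEq, sr.injEq, mul_one, mul_zero,
    zero_add] at h0 h1
  exact ⟨h1, h0⟩

theorem dihAut_one : dihAut n 1 0 = 1 := by
  ext (j | j) <;> simp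

theorem dihAut_eq_one_iff {k : (ZMod n)ˣ} {m : ZMod n} :
    dihAut n k m = 1 ↔ (k : ZMod n) = 1 ∧ m = 0 := by
  rw [← dihAut_one, dihAut_eq_dihAut_iff, Units.val_one]

theorem dihAut_neg_one_one_mul_self : dihAut n (-1) 1 * dihAut n (-1) 1 = 1 := by
  rw [dihAut_mul, dihAut_eq_one_iff]
  constructor <;> simp

theorem exists_dihAut_eq {σ : MulAut (DihedralGroup n)} {m t : ZMod n}
    (h0 : σ (sr 0) = sr m) (h1 : σ (sr 1) = sr t) :
    ∃ k : (ZMod n)ˣ, (k : ZMod n) = t - m ∧ σ = dihAut n k m := by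
  have hr : ∀ j : ZMod n, σ (r j) = r ((t - m) * j) := by
    intro j
    rw [← ZMod.intCast_zmod_cast j, ← r_one_zpow, map_zpow,
      show (r 1 : DihedralGroup n) = sr 0 * sr 1 by simp, map_mul, h0, h1, sr_mul_sr, r_zpow]
  have hsr : ∀ j : ZMod n, σ (sr j) = sr ((t - m) * j + m) := by
    intro j
    rw [show sr j = sr 0 * r j by simp, map_mul, h0, hr, sr_mul_r, add_comm]
  have hunit : IsUnit (t - m) := by
    obtain ⟨g | g, hg⟩ := σ.surjective (r 1)
    · rw [hr, r.injEq] at hg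
      exact IsUnit.of_mul_eq_one _ hg
    · simp [hsr] at hg
  refine ⟨hunit.unit, hunit.unit_spec, ?_⟩
  ext (j | j)
  · simp [hr]
  · simp [hsr]

theorem dihAut_mem_autSub_iff {S : Set (ZMod n)} (hS : S.Finite) {k : (ZMod n)ˣ}
    {m : ZMod n} :
    dihAut n k m ∈ autSub (sr '' S) ↔ Set.MapsTo (fun v => (k : ZMod n) * v + m) S S := by
  refine ⟨fun h v hv => ?_, fun h => mem_autSub_of_mapsTo (hS.image _) ?_⟩
  · obtain ⟨w, hw, hwv⟩ := apply_mem_of_mem_autSub h (Set.mem_image_of_mem sr hv)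
    rw [dihAut_apply_sr, sr.injEq] at hwv
    rwa [hwv] at hw
  · rintro _ ⟨v, hv, rfl⟩
    exact ⟨_, h hv, rfl⟩

theorem closure_eq_top_of_sr_mem {C : Set (DihedralGroup n)} (h0 : sr 0 ∈ C) (h1 : sr 1 ∈ C) :
    Subgroup.closure C = ⊤ := by
  have hr1 : r 1 ∈ Subgroup.closure C := by
    rw [show (r 1 : DihedralGroup n) = sr 0 * sr 1 by simp]
    exact mul_mem (Subgroup.subset_closure h0) (Subgroup.subset_closure h1)
  have hr : ∀ j, r j ∈ Subgroup.closure C := fun j => by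
    rw [← ZMod.intCast_zmod_cast j, ← r_one_zpow]
    exact zpow_mem hr1 _
  rw [Subgroup.eq_top_iff']
  rintro (j | j)
  · exact hr j
  · rw [show sr j = sr 0 * r j by simp]
    exact mul_mem (Subgroup.subset_closure h0) (hr j)

theorem isTransGenSet_image_sr {S : Set (ZMod n)} (h0 : 0 ∈ S) (h1 : 1 ∈ S)
    (htrans : ∀ c ∈ sr '' S, ∀ c' ∈ sr '' S, ∃ σ ∈ autSub (sr '' S), σ c = c') :
    IsTransGenSet (sr '' S) := by
  refine ⟨?_, ?_, closure_eq_top_of_sr_mem ⟨0, h0, rfl⟩ ⟨1, h1, rfl⟩, Or.inl htrans⟩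
  · rintro ⟨v, -, hv⟩
    cases hv
  · rintro _ ⟨v, hv, rfl⟩
    exact ⟨v, hv, (inv_sr v).symm⟩

end DihedralAut

section DihedralPresentation

variable {M : Type*} [Group M] {m : ℕ} [NeZero m]

theorem pow_val_add {z : M} (hz : z ^ m = 1) (a b : ZMod m) :
    z ^ (a + b).val = z ^ a.val * z ^ b.val := by
  rw [ZMod.val_add, ← pow_eq_pow_mod _ hz, pow_add]

theorem pow_val_sub {z : M} (hz : z ^ m = 1) (a b : ZMod m) :
    z ^ (b - a).val = (z ^ a.val)⁻¹ * z ^ b.val := by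
  rw [eq_inv_mul_iff_mul_eq, ← pow_val_add hz, add_sub_cancel]

theorem mul_pow_mul_eq_inv {x y : M} (hx : x * x = 1) (hy : y * y = 1) (k : ℕ) :
    x * (x * y) ^ k * x = ((x * y) ^ k)⁻¹ := by
  have hx' : x⁻¹ = x := inv_eq_of_mul_eq_one_right hx
  have hy' : y⁻¹ = y := inv_eq_of_mul_eq_one_right hy
  calc x * (x * y) ^ k * x = (x * (x * y) * x⁻¹) ^ k := by rw [conj_pow, hx']
    _ = ((x * y) ^ k)⁻¹ := by
      rw [← inv_pow, mul_inv_rev, hx', hy', ← mul_assoc, hx, one_mul]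

def dihedralHom (x y : M) (hx : x * x = 1) (hy : y * y = 1) (hxy : (x * y) ^ m = 1) :
    DihedralGroup m →* M where
  toFun g := match g with
    | r j => (x * y) ^ j.val
    | sr j => x * (x * y) ^ j.val
  map_one' := show (x * y) ^ (0 : ZMod m).val = 1 by rw [ZMod.val_zero, pow_zero]
  map_mul' := by
    have hconj := mul_pow_mul_eq_inv hx hy
    rintro (a | a) (b | b) <;> simp only [r_mul_r, r_mul_sr, sr_mul_r, sr_mul_sr]
    · exact pow_val_add hxy a b
    · rw [pow_val_sub hxy, ← hconj]
      simp only [← mul_assoc, hx, one_mul]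
    · rw [pow_val_add hxy, mul_assoc]
    · rw [pow_val_sub hxy, ← hconj]
      simp only [← mul_assoc]

@[simp]
theorem dihedralHom_sr {x y : M} (hx : x * x = 1) (hy : y * y = 1) (hxy : (x * y) ^ m = 1)
    (j : ZMod m) : dihedralHom x y hx hy hxy (sr j) = x * (x * y) ^ j.val := rfl

theorem nonempty_closure_mulEquiv_dihedralGroup {x y : M} (hx : x * x = 1) (hy : y * y = 1)
    (horder : orderOf (x * y) = m) (hx_ne : ∀ j < m, (x * y) ^ j ≠ x) :
    Nonempty (Subgroup.closure {x, y} ≃* DihedralGroup m) := by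
  have hxy : (x * y) ^ m = 1 := horder ▸ pow_orderOf_eq_one _
  set F := dihedralHom x y hx hy hxy
  have hxc : x ∈ Subgroup.closure {x, y} := Subgroup.subset_closure (by simp)
  have hyc : y ∈ Subgroup.closure {x, y} := Subgroup.subset_closure (by simp)
  have hrange : F.range = Subgroup.closure {x, y} := by
    refine le_antisymm ?_ ((Subgroup.closure_le _).mpr ?_)
    · rintro _ ⟨j | j, rfl⟩
      · exact pow_mem (mul_mem hxc hyc) _
      · exact mul_mem hxc (pow_mem (mul_mem hxc hyc) _)
    · rintro _ (rfl | rfl)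
      · exact ⟨sr 0, by simp [F]⟩
      · refine ⟨sr 1, ?_⟩
        rw [dihedralHom_sr, ZMod.val_one_eq_one_mod, ← pow_eq_pow_mod _ hxy, pow_one,
          ← mul_assoc, hx, one_mul]
  have hinj : Function.Injective F := by
    rw [injective_iff_map_eq_one]
    rintro (j | j) h
    · have hdvd : orderOf (x * y) ∣ j.val := orderOf_dvd_of_pow_eq_one h
      rw [horder] at hdvd
      rw [(ZMod.val_eq_zero j).mp (Nat.eq_zero_of_dvd_of_lt hdvd (ZMod.val_lt j))]
      rfl
    · refine absurd ?_ (hx_ne j.val (ZMod.val_lt j))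
      have h' : x * (x * y) ^ j.val = 1 := h
      rw [← inv_eq_of_mul_eq_one_right h', inv_eq_of_mul_eq_one_right hx]
  exact ⟨(MulEquiv.subgroupCongr hrange.symm).trans (MonoidHom.ofInjective hinj).symm⟩

end DihedralPresentation

section Exponents

variable {n : ℕ} {I : ZMod n}

def expSet (I : ZMod n) : Set (ZMod n) := {0, 1, I, 1 - I}

theorem mem_expSet {v : ZMod n} : v ∈ expSet I ↔ v = 0 ∨ v = 1 ∨ v = I ∨ v = 1 - I := by
  simp [expSet]

theorem finite_expSet (I : ZMod n) : (expSet I).Finite := Set.toFinite {0, 1, I, 1 - I}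

theorem sr_zero_mem_image_expSet (I : ZMod n) : sr 0 ∈ sr '' expSet I :=
  Set.mem_image_of_mem sr (Or.inl rfl)

theorem expSet_one_sub (I : ZMod n) : expSet (1 - I) = expSet I := by
  rw [expSet, expSet, sub_sub_cancel, Set.pair_comm]

theorem ncard_image_sr_expSet (hI0 : I ≠ 0) (hI1 : I ≠ 1) (hrel : 2 * I * (I - 1) = 0) :
    (sr '' expSet I).ncard = 4 := by
  have h2I : I ≠ 1 - I := fun h => hI1 (by linear_combination hrel - (I - 1) * h)
  have h10 : (1 : ZMod n) ≠ 0 := fun h => hI0 (by linear_combination I * h)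
  rw [Set.ncard_image_of_injective _ fun _ _ => sr.inj, expSet, Set.ncard_insert_of_notMem,
    Set.ncard_insert_of_notMem, Set.ncard_pair h2I]
  · simp only [Set.mem_insert_iff, Set.mem_singleton_iff, not_or]
    exact ⟨Ne.symm hI1, fun h => hI0 (by linear_combination h)⟩
  · simp only [Set.mem_insert_iff, Set.mem_singleton_iff, not_or]
    exact ⟨h10.symm, Ne.symm hI0, fun h => hI1 (by linear_combination h)⟩

theorem isUnit_two_mul_sub_one (hrel : 2 * I * (I - 1) = 0) : IsUnit (2 * I - 1) :=
  IsUnit.of_mul_eq_one (2 * I - 1) (by linear_combination 2 * hrel)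

theorem mul_self_eq_one_of_mapsTo {J : ZMod n} (hJ : IsUnit J) (hJ1 : J ≠ 1)
    (hrel : 2 * J * (J - 1) = 0) (h2 : (2 : ZMod n) ≠ 0)
    (h : Set.MapsTo (J * ·) (expSet J) (expSet J)) : J * J = 1 := by
  have hJJ := mem_expSet.mp (h (mem_expSet.mpr (by tauto) : J ∈ expSet J))
  have hJ1J := mem_expSet.mp (h (mem_expSet.mpr (by tauto) : 1 - J ∈ expSet J))
  have : Nontrivial (ZMod n) := nontrivial_of_ne 2 0 h2
  rcases hJJ with hsq | hsq | hsq | hsq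
  · exact absurd (hJ.mul_right_eq_zero.mp hsq) hJ.ne_zero
  · exact hsq
  · exact absurd (hJ.mul_left_cancel (hsq.trans (mul_one J).symm)) hJ1
  · rcases hJ1J with e | e | e | e
    · exact absurd (by linear_combination hrel - (J - 1) * (hsq + e)) hJ1
    · exact absurd (by linear_combination -hrel - 2 * e) h2
    · exact absurd (by linear_combination hsq + e) hJ1
    · exact absurd (by linear_combination hsq - hrel - e) hJ.ne_zero

theorem eq_one_or_of_mapsTo_mul {k : ZMod n} (hk : IsUnit k) (hI0 : I ≠ 0) (hI1 : I ≠ 1)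
    (hrel : 2 * I * (I - 1) = 0) (h2 : (2 : ZMod n) ≠ 0)
    (h : Set.MapsTo (k * ·) (expSet I) (expSet I)) :
    k = 1 ∨ (k = I ∧ I * I = 1) ∨ (k = 1 - I ∧ (1 - I) * (1 - I) = 1) := by
  have : Nontrivial (ZMod n) := nontrivial_of_ne 2 0 h2
  have hk1 : k ∈ expSet I := by
    simpa using h (mem_expSet.mpr (by tauto) : (1 : ZMod n) ∈ expSet I)
  rcases mem_expSet.mp hk1 with rfl | rfl | rfl | rfl
  · exact absurd hk not_isUnit_zero
  · exact Or.inl rfl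
  · exact Or.inr (Or.inl ⟨rfl, mul_self_eq_one_of_mapsTo hk hI1 hrel h2 h⟩)
  · refine Or.inr (Or.inr ⟨rfl, mul_self_eq_one_of_mapsTo hk ?_ ?_ h2 ?_⟩)
    · exact fun h => hI0 (by linear_combination -h)
    · linear_combination hrel
    · rwa [expSet_one_sub]

theorem exists_dihAut_of_mem_autSub_of_apply_sr_zero (hI0 : I ≠ 0) (hI1 : I ≠ 1)
    (hrel : 2 * I * (I - 1) = 0) (h2 : (2 : ZMod n) ≠ 0) {σ : MulAut (DihedralGroup n)}
    (hσ : σ ∈ autSub (sr '' expSet I)) (hfix : σ (sr 0) = sr 0) :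
    ∃ k : (ZMod n)ˣ, σ = dihAut n k 0 ∧
      ((k : ZMod n) = 1 ∨ (k = I ∧ I * I = 1) ∨ (k = 1 - I ∧ (1 - I) * (1 - I) = 1)) := by
  obtain ⟨t, -, ht⟩ := apply_mem_of_mem_autSub hσ (Set.mem_image_of_mem sr
    (mem_expSet.mpr (by tauto) : (1 : ZMod n) ∈ expSet I))
  obtain ⟨k, -, rfl⟩ := exists_dihAut_eq hfix ht.symm
  refine ⟨k, rfl, eq_one_or_of_mapsTo_mul k.isUnit hI0 hI1 hrel h2 fun v hv => ?_⟩
  simpa using (dihAut_mem_autSub_iff (finite_expSet I)).mp hσ hv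

variable {w : (ZMod n)ˣ}

theorem closure_le_autSub_expSet (hw : (w : ZMod n) = 2 * I - 1)
    (hrel : 2 * I * (I - 1) = 0) :
    Subgroup.closure {dihAut n (-1) 1, dihAut n w (1 - I)} ≤ autSub (sr '' expSet I) := by
  rw [Subgroup.closure_le]
  rintro _ (rfl | rfl) <;> refine (dihAut_mem_autSub_iff (finite_expSet I)).mpr fun v hv => ?_
  all_goals
    simp only [mem_expSet, Units.val_neg, Units.val_one, hw] at hv ⊢
    rcases hv with rfl | rfl | rfl | rfl
  · exact Or.inr (Or.inl (by ring))
  · exact Or.inl (by ring)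
  · exact Or.inr (Or.inr (Or.inr (by ring)))
  · exact Or.inr (Or.inr (Or.inl (by ring)))
  · exact Or.inr (Or.inr (Or.inr (by ring)))
  · exact Or.inr (Or.inr (Or.inl (by ring)))
  · exact Or.inr (Or.inl (by linear_combination hrel))
  · exact Or.inl (by linear_combination -hrel)

theorem exists_mem_closure_apply_sr_zero :
    ∀ c ∈ sr '' expSet I, ∃ ρ ∈ Subgroup.closure {dihAut n (-1) 1, dihAut n w (1 - I)},
      ρ (sr 0) = c := by
  have ha : dihAut n (-1) 1 ∈ Subgroup.closure {dihAut n (-1) 1, dihAut n w (1 - I)} :=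
    Subgroup.subset_closure (by simp)
  have hb : dihAut n w (1 - I) ∈ Subgroup.closure {dihAut n (-1) 1, dihAut n w (1 - I)} :=
    Subgroup.subset_closure (by simp)
  rintro _ ⟨v, hv, rfl⟩
  rcases mem_expSet.mp hv with rfl | rfl | rfl | rfl
  · exact ⟨1, one_mem _, rfl⟩
  · exact ⟨_, ha, by simp⟩
  · exact ⟨_, mul_mem ha hb, by simp [MulAut.mul_apply]⟩
  · exact ⟨_, hb, by simp⟩

theorem exists_mem_autSub_apply_eq_expSet (hrel : 2 * I * (I - 1) = 0) :
    ∀ c ∈ sr '' expSet I, ∀ c' ∈ sr '' expSet I, ∃ σ ∈ autSub (sr '' expSet I), σ c = c' := by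
  obtain ⟨w, hw⟩ := isUnit_two_mul_sub_one hrel
  refine exists_mem_autSub_apply_eq (c₀ := sr 0) fun c hc => ?_
  obtain ⟨ρ, hρ, hρc⟩ := exists_mem_closure_apply_sr_zero (w := w) c hc
  exact ⟨ρ, closure_le_autSub_expSet hw hrel hρ, hρc⟩

theorem autSub_eq_closure_of_mul_self_ne_one (hw : (w : ZMod n) = 2 * I - 1) (hI0 : I ≠ 0)
    (hI1 : I ≠ 1) (hrel : 2 * I * (I - 1) = 0) (h2 : (2 : ZMod n) ≠ 0) (hsq : I * I ≠ 1)
    (hsq' : (1 - I) * (1 - I) ≠ 1) :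
    autSub (sr '' expSet I) = Subgroup.closure {dihAut n (-1) 1, dihAut n w (1 - I)} := by
  refine autSub_eq_of_stabilizer_le (sr_zero_mem_image_expSet I)
    (closure_le_autSub_expSet hw hrel) exists_mem_closure_apply_sr_zero fun σ hσ hfix => ?_
  obtain ⟨k, rfl, hk | ⟨-, hI⟩ | ⟨-, hI⟩⟩ :=
    exists_dihAut_of_mem_autSub_of_apply_sr_zero hI0 hI1 hrel h2 hσ hfix
  · rw [dihAut_eq_one_iff.mpr ⟨hk, rfl⟩]
    exact one_mem _
  · exact absurd hI hsq
  · exact absurd hI hsq'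

theorem nonempty_closure_mulEquiv_klein (hw : (w : ZMod n) = 2 * I - 1) (hI0 : I ≠ 0)
    (hI1 : I ≠ 1) (hrel : 2 * I * (I - 1) = 0) :
    Nonempty (Subgroup.closure {dihAut n (-1) 1, dihAut n w (1 - I)} ≃*
      Multiplicative (ZMod 2) × Multiplicative (ZMod 2)) := by
  have h10 : (1 : ZMod n) ≠ 0 := fun h => hI0 (by linear_combination I * h)
  have hab : dihAut n (-1) 1 * dihAut n w (1 - I) = dihAut n (-w) I := by
    rw [dihAut_mul, dihAut_eq_dihAut_iff]
    constructor <;> simp only [Units.val_mul, Units.val_neg, Units.val_one] <;> ring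
  have hbb : dihAut n w (1 - I) * dihAut n w (1 - I) = 1 := by
    rw [dihAut_mul, dihAut_eq_one_iff, Units.val_mul, hw]
    exact ⟨by linear_combination 2 * hrel, by linear_combination -hrel⟩
  have habab : dihAut n (-w) I * dihAut n (-w) I = 1 := by
    rw [dihAut_mul, dihAut_eq_one_iff, Units.val_mul, Units.val_neg, hw]
    exact ⟨by linear_combination 2 * hrel, by linear_combination -hrel⟩
  have horder : orderOf (dihAut n (-1) 1 * dihAut n w (1 - I)) = 2 := by
    rw [hab]
    exact orderOf_eq_prime (by rwa [sq]) fun h => hI0 (dihAut_eq_one_iff.mp h).2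
  have hne : ∀ j < 2, (dihAut n (-1) 1 * dihAut n w (1 - I)) ^ j ≠ dihAut n (-1) 1 := by
    intro j hj
    interval_cases j
    · exact fun h => h10 (dihAut_eq_one_iff.mp h.symm).2
    · rw [pow_one, hab]
      exact fun h => hI1 (dihAut_eq_dihAut_iff.mp h).2
  obtain ⟨e⟩ := nonempty_closure_mulEquiv_dihedralGroup dihAut_neg_one_one_mul_self hbb horder hne
  obtain ⟨e'⟩ := IsKleinFour.nonempty_mulEquiv (G₁ := DihedralGroup 2)
    (G₂ := Multiplicative (ZMod 2 × ZMod 2))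
  exact ⟨(e.trans e').trans (MulEquiv.prodMultiplicative _ _)⟩

end Exponents

section Special

variable {n : ℕ} {H : ZMod n} {u : (ZMod n)ˣ}

theorem dihAut_mul_dihAut_sq (hu : (u : ZMod n) = H + 1) (h2H : 2 * H = 0) (hHH : H * H = 0) :
    (dihAut n u 0 * dihAut n (-1) 1) ^ 2 = dihAut n 1 H := by
  rw [sq, dihAut_mul, dihAut_mul, dihAut_eq_dihAut_iff]
  simp only [Units.val_mul, Units.val_neg, Units.val_one, hu]
  exact ⟨by linear_combination hHH + h2H, by linear_combination -hHH - h2H⟩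

theorem dihAut_mem_autSub_expSet_of_two_mul_eq_zero (hu : (u : ZMod n) = H + 1)
    (h2H : 2 * H = 0) (hHH : H * H = 0) : dihAut n u 0 ∈ autSub (sr '' expSet H) := by
  refine (dihAut_mem_autSub_iff (finite_expSet H)).mpr fun v hv => ?_
  simp only [mem_expSet, hu] at hv ⊢
  rcases hv with rfl | rfl | rfl | rfl
  · exact Or.inl (by ring)
  · exact Or.inr (Or.inr (Or.inr (by linear_combination h2H)))
  · exact Or.inr (Or.inr (Or.inl (by linear_combination hHH)))
  · exact Or.inr (Or.inl (by linear_combination -hHH))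

theorem closure_le_closure_of_two_mul_eq_zero (hu : (u : ZMod n) = H + 1) (h2H : 2 * H = 0)
    (hHH : H * H = 0) :
    Subgroup.closure {dihAut n (-1) 1, dihAut n (-1) (1 - H)} ≤
      Subgroup.closure {dihAut n u 0, dihAut n (-1) 1} := by
  have hx : dihAut n u 0 ∈ Subgroup.closure {dihAut n u 0, dihAut n (-1) 1} :=
    Subgroup.subset_closure (by simp)
  have hy : dihAut n (-1) 1 ∈ Subgroup.closure {dihAut n u 0, dihAut n (-1) 1} :=
    Subgroup.subset_closure (by simp)
  have hb : dihAut n (-1) (1 - H) = dihAut n (-1) 1 * (dihAut n u 0 * dihAut n (-1) 1) ^ 2 := by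
    rw [dihAut_mul_dihAut_sq hu h2H hHH, dihAut_mul, dihAut_eq_dihAut_iff]
    simp only [Units.val_mul, Units.val_neg, Units.val_one]
    constructor <;> ring
  rw [Subgroup.closure_le]
  rintro _ (rfl | rfl)
  · exact hy
  · rw [hb]
    exact mul_mem hy (pow_mem (mul_mem hx hy) 2)

theorem autSub_eq_closure_of_two_mul_eq_zero (hu : (u : ZMod n) = H + 1) (hH0 : H ≠ 0)
    (h2 : (2 : ZMod n) ≠ 0) (h2H : 2 * H = 0) (hHH : H * H = 0) :
    autSub (sr '' expSet H) = Subgroup.closure {dihAut n u 0, dihAut n (-1) 1} := by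
  have hH1 : H ≠ 1 := fun h => h2 (by linear_combination h2H - 2 * h)
  have hrel : 2 * H * (H - 1) = 0 := by linear_combination (H - 1) * h2H
  have hw : ((-1 : (ZMod n)ˣ) : ZMod n) = 2 * H - 1 := by
    simp only [Units.val_neg, Units.val_one]
    linear_combination -h2H
  have hL : Subgroup.closure {dihAut n u 0, dihAut n (-1) 1} ≤ autSub (sr '' expSet H) := by
    rw [Subgroup.closure_le]
    rintro _ (rfl | rfl)
    · exact dihAut_mem_autSub_expSet_of_two_mul_eq_zero hu h2H hHH
    · exact closure_le_autSub_expSet hw hrel (Subgroup.subset_closure (by simp))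
  refine autSub_eq_of_stabilizer_le (sr_zero_mem_image_expSet H) hL
    (fun c hc => ?_) fun σ hσ hfix => ?_
  · obtain ⟨ρ, hρ, hρc⟩ := exists_mem_closure_apply_sr_zero (w := -1) c hc
    exact ⟨ρ, closure_le_closure_of_two_mul_eq_zero hu h2H hHH hρ, hρc⟩
  obtain ⟨k, rfl, hk | ⟨-, hH⟩ | ⟨hk, -⟩⟩ :=
    exists_dihAut_of_mem_autSub_of_apply_sr_zero hH0 hH1 hrel h2 hσ hfix
  · rw [dihAut_eq_one_iff.mpr ⟨hk, rfl⟩]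
    exact one_mem _
  · exact absurd (by linear_combination 2 * hHH - 2 * hH) h2
  · have hku : dihAut n k 0 = dihAut n u 0 :=
      dihAut_eq_dihAut_iff.mpr ⟨by rw [hk, hu]; linear_combination -h2H, rfl⟩
    exact hku ▸ Subgroup.subset_closure (by simp)

theorem nonempty_closure_mulEquiv_dihedralGroup_four (hu : (u : ZMod n) = H + 1) (hH0 : H ≠ 0)
    (h2H : 2 * H = 0) (hHH : H * H = 0) :
    Nonempty (Subgroup.closure {dihAut n u 0, dihAut n (-1) 1} ≃* DihedralGroup 4) := by
  have : Nontrivial (ZMod n) := nontrivial_of_ne H 0 hH0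
  have hxx : dihAut n u 0 * dihAut n u 0 = 1 := by
    rw [dihAut_mul, dihAut_eq_one_iff, Units.val_mul, hu]
    exact ⟨by linear_combination hHH + h2H, by ring⟩
  have hz : dihAut n u 0 * dihAut n (-1) 1 = dihAut n (-u) u := by
    rw [dihAut_mul, dihAut_eq_dihAut_iff]
    exact ⟨by simp, by ring⟩
  have hz2 := dihAut_mul_dihAut_sq hu h2H hHH
  have hz3 : (dihAut n u 0 * dihAut n (-1) 1) ^ 3 = dihAut n (-u) 1 := by
    rw [pow_succ, hz2, hz, dihAut_mul, dihAut_eq_dihAut_iff, Units.val_one, one_mul, hu]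
    exact ⟨rfl, by linear_combination h2H⟩
  have horder : orderOf (dihAut n u 0 * dihAut n (-1) 1) = 2 ^ 2 := by
    refine orderOf_eq_prime_pow ?_ ?_
    · rw [pow_one, hz2, dihAut_eq_one_iff]
      exact fun h => hH0 h.2
    · rw [pow_succ, pow_one, pow_mul, hz2, sq, dihAut_mul, dihAut_eq_one_iff, Units.val_one]
      exact ⟨one_mul 1, by linear_combination h2H⟩
  have hne : ∀ j < 2 ^ 2, (dihAut n u 0 * dihAut n (-1) 1) ^ j ≠ dihAut n u 0 := by
    intro j hj
    norm_num at hj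
    interval_cases j
    · rw [pow_zero]
      intro h
      have hu1 := (dihAut_eq_one_iff.mp h.symm).1
      exact hH0 (by linear_combination hu1 - hu)
    · rw [pow_one, hz]
      exact fun h => u.ne_zero (dihAut_eq_dihAut_iff.mp h).2
    · rw [hz2]
      exact fun h => hH0 (dihAut_eq_dihAut_iff.mp h).2
    · rw [hz3]
      exact fun h => one_ne_zero (dihAut_eq_dihAut_iff.mp h).2
  exact nonempty_closure_mulEquiv_dihedralGroup hxx dihAut_neg_one_one_mul_self horder hne

end Special

theorem natCast_ne_natCast_of_lt {n a b : ℕ} (ha : a < n) (hb : b < n) (hab : a ≠ b) :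
    (a : ZMod n) ≠ b := by
  rwa [Ne, ZMod.natCast_eq_natCast_iff', Nat.mod_eq_of_lt ha, Nat.mod_eq_of_lt hb]

theorem mod_four_eq_zero_and_eq_half_add_one {n i : ℕ} (hi : 2 ≤ i) (hin : i < n)
    (hrel : 2 * (i : ZMod n) * (i - 1) = 0) (hsq : (i : ZMod n) * i = 1) :
    n % 4 = 0 ∧ i = n / 2 + 1 := by
  have hcast : ((i - 1 : ℕ) : ZMod n) = i - 1 := by
    push_cast [Nat.cast_sub (by omega : 1 ≤ i)]
    ring
  have h2 : n ∣ 2 * (i - 1) := by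
    rw [← ZMod.natCast_eq_zero_iff, Nat.cast_mul, hcast]
    push_cast
    linear_combination 2 * hsq - hrel
  have hsq' : n ∣ (i - 1) * (i - 1) := by
    rw [← ZMod.natCast_eq_zero_iff, Nat.cast_mul, hcast]
    linear_combination hrel - hsq
  have hn : 2 * (i - 1) = n := Nat.eq_of_dvd_of_lt_two_mul (by omega) h2 (by omega)
  rw [← hn, Nat.mul_dvd_mul_iff_right (by omega)] at hsq'
  omega

theorem mod_four_eq_zero_of_mul_self_eq_one {n i : ℕ} (hi1 : 2 ≤ i) (hi2 : i ≤ n - 1)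
    (hrel : 2 * (i : ZMod n) * (i - 1) = 0)
    (hsq : (i : ZMod n) * i = 1 ∨ (1 - (i : ZMod n)) * (1 - i) = 1) :
    n % 4 = 0 ∧ (i = n / 2 ∨ i = n / 2 + 1) := by
  rcases hsq with hsq | hsq
  · obtain ⟨h4, hi⟩ := mod_four_eq_zero_and_eq_half_add_one hi1 (by omega) hrel hsq
    exact ⟨h4, Or.inr hi⟩
  · -- `i ↦ n + 1 - i` exchanges `i` and `1 - i` modulo `n`.
    have hi' : ((n + 1 - i : ℕ) : ZMod n) = 1 - i := by
      push_cast [Nat.cast_sub (by omega : i ≤ n + 1), ZMod.natCast_self]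
      ring
    obtain ⟨h4, hi⟩ := mod_four_eq_zero_and_eq_half_add_one (n := n) (i := n + 1 - i)
      (by omega) (by omega) (by rw [hi']; linear_combination hrel) (by rwa [hi'])
    exact ⟨h4, Or.inl (by omega)⟩

theorem exists_autSub_eq_closure_of_mod_four_eq_zero {n i : ℕ} (hi1 : 2 ≤ i)
    (h4 : n % 4 = 0) (hi : i = n / 2 ∨ i = n / 2 + 1) :
    ∃ u : (ZMod n)ˣ, (u : ZMod n) = ((n / 2 + 1 : ℕ) : ZMod n) ∧
      autSub (sr '' expSet (i : ZMod n)) = Subgroup.closure {dihAut n u 0, dihAut n (-1) 1} ∧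
      Nonempty (autSub (sr '' expSet (i : ZMod n)) ≃* DihedralGroup 4) := by
  obtain ⟨q, hq⟩ : ∃ q, n = 4 * q := ⟨n / 4, by omega⟩
  set H : ZMod n := ((n / 2 : ℕ) : ZMod n) with hH
  have h2H : 2 * H = 0 := by
    have h : ((2 * (n / 2) : ℕ) : ZMod n) = 0 := by
      rw [show 2 * (n / 2) = n by omega, ZMod.natCast_self]
    rw [hH]
    exact_mod_cast h
  have hHH : H * H = 0 := by
    rw [hH, ← Nat.cast_mul, ZMod.natCast_eq_zero_iff, show n / 2 = 2 * q by omega, hq]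
    exact ⟨q, by ring⟩
  have hH0 : H ≠ 0 := by
    simpa using natCast_ne_natCast_of_lt (n := n) (a := n / 2) (b := 0) (by omega) (by omega)
      (by omega)
  have h2 : (2 : ZMod n) ≠ 0 := by
    simpa using natCast_ne_natCast_of_lt (n := n) (a := 2) (b := 0) (by omega) (by omega)
      two_ne_zero
  have hexp : expSet (i : ZMod n) = expSet H := by
    rcases hi with rfl | rfl
    · rfl
    · rw [← expSet_one_sub H]
      congr 1
      push_cast
      rw [← hH]
      linear_combination h2H
  set u : (ZMod n)ˣ := Units.mkOfMulEqOne (H + 1) (H + 1) (by linear_combination hHH + h2H)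
  have hu : (u : ZMod n) = H + 1 := rfl
  rw [hexp, autSub_eq_closure_of_two_mul_eq_zero hu hH0 h2 h2H hHH]
  exact ⟨u, by rw [hu, hH]; push_cast; rfl, rfl,
    nonempty_closure_mulEquiv_dihedralGroup_four hu hH0 h2H hHH⟩

theorem stmt13_general (n : ℕ) (i : ℕ) (hi1 : 2 ≤ i) (hi2 : i ≤ n - 1)
    (hdvd : n ∣ 2 * i * (i - 1))
    (C : Set (DihedralGroup n))
    (hCdef : C = {DihedralGroup.sr 0, DihedralGroup.sr 1, DihedralGroup.sr (i : ZMod n),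
      DihedralGroup.sr (1 - (i : ZMod n))}) :
    C.ncard = 4 ∧ IsTransGenSet C ∧
    (∀ c ∈ C, ∀ c' ∈ C, ∃ σ ∈ autSub C, σ c = c') ∧
    ((n % 4 = 0 ∧ (i = n / 2 ∨ i = n / 2 + 1)) →
      ∃ u : (ZMod n)ˣ, (u : ZMod n) = ((n / 2 + 1 : ℕ) : ZMod n) ∧
        autSub C = Subgroup.closure {dihAut n u 0, dihAut n (-1) 1} ∧
        Nonempty (autSub C ≃* DihedralGroup 4)) ∧
    (¬(n % 4 = 0 ∧ (i = n / 2 ∨ i = n / 2 + 1)) →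
      ∃ w : (ZMod n)ˣ, (w : ZMod n) = ((2 * i - 1 : ℕ) : ZMod n) ∧
        autSub C = Subgroup.closure {dihAut n (-1) 1, dihAut n w (1 - (i : ZMod n))} ∧
        Nonempty (autSub C ≃* Multiplicative (ZMod 2) × Multiplicative (ZMod 2))) := by
  have hI0 : (i : ZMod n) ≠ 0 := by
    simpa using natCast_ne_natCast_of_lt (n := n) (a := i) (b := 0) (by omega) (by omega)
      (by omega)
  have hI1 : (i : ZMod n) ≠ 1 := by
    simpa using natCast_ne_natCast_of_lt (n := n) (a := i) (b := 1) (by omega) (by omega)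
      (by omega)
  have h2 : (2 : ZMod n) ≠ 0 := by
    simpa using natCast_ne_natCast_of_lt (n := n) (a := 2) (b := 0) (by omega) (by omega)
      two_ne_zero
  have hrel : 2 * (i : ZMod n) * (i - 1) = 0 := by
    simpa [Nat.cast_sub (by omega : 1 ≤ i)] using (ZMod.natCast_eq_zero_iff _ n).mpr hdvd
  obtain rfl : C = sr '' expSet (i : ZMod n) := by simp [hCdef, expSet, Set.image_insert_eq]
  have htrans := exists_mem_autSub_apply_eq_expSet hrel
  refine ⟨ncard_image_sr_expSet hI0 hI1 hrel,
    isTransGenSet_image_sr (Or.inl rfl) (Or.inr (Or.inl rfl)) htrans, htrans,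
    fun ⟨h4, hi⟩ => exists_autSub_eq_closure_of_mod_four_eq_zero hi1 h4 hi, fun hgeneric => ?_⟩
  obtain ⟨hsq, hsq'⟩ := not_or.mp (mt (mod_four_eq_zero_of_mul_self_eq_one hi1 hi2 hrel) hgeneric)
  have hw : ((2 * i - 1 : ℕ) : ZMod n) = 2 * i - 1 := by
    push_cast [Nat.cast_sub (by omega : 1 ≤ 2 * i)]
    ring
  obtain ⟨w, hw'⟩ := isUnit_two_mul_sub_one hrel
  rw [autSub_eq_closure_of_mul_self_ne_one hw' hI0 hI1 hrel h2 hsq hsq']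
  exact ⟨w, hw'.trans hw.symm, rfl, nonempty_closure_mulEquiv_klein hw' hI0 hI1 hrel⟩

/-- For `2 ≤ i ≤ n-1` with `gcd(2i-1,n) = 1` and `n ∣ 2i(i-1)`, the set
`C = {b, ba, ba^i, ba^{1-i}}` has size 4, is a transitive inverse-closed generating set on
which `Aut(G;C)` acts transitively, and `Aut(G;C)` is `D₈` if `n ≡ 0 (mod 4)` and
`i ∈ {n/2, n/2+1}`, and `Z₂ × Z₂` otherwise. -/
theorem stmt13 (n : ℕ) (hn : 3 ≤ n) (i : ℕ) (hi1 : 2 ≤ i) (hi2 : i ≤ n - 1)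
    (hgcd : Nat.gcd (2 * i - 1) n = 1) (hdvd : n ∣ 2 * i * (i - 1))
    (C : Set (DihedralGroup n))
    (hCdef : C = {DihedralGroup.sr 0, DihedralGroup.sr 1, DihedralGroup.sr (i : ZMod n),
      DihedralGroup.sr (1 - (i : ZMod n))}) :
    C.ncard = 4 ∧ IsTransGenSet C ∧
    (∀ c ∈ C, ∀ c' ∈ C, ∃ σ ∈ autSub C, σ c = c') ∧
    ((n % 4 = 0 ∧ (i = n / 2 ∨ i = n / 2 + 1)) →
      ∃ u : (ZMod n)ˣ, (u : ZMod n) = ((n / 2 + 1 : ℕ) : ZMod n) ∧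
        autSub C = Subgroup.closure {dihAut n u 0, dihAut n (-1) 1} ∧
        Nonempty (autSub C ≃* DihedralGroup 4)) ∧
    (¬(n % 4 = 0 ∧ (i = n / 2 ∨ i = n / 2 + 1)) →
      ∃ w : (ZMod n)ˣ, (w : ZMod n) = ((2 * i - 1 : ℕ) : ZMod n) ∧
        autSub C = Subgroup.closure {dihAut n (-1) 1, dihAut n w (1 - (i : ZMod n))} ∧
        Nonempty (autSub C ≃* Multiplicative (ZMod 2) × Multiplicative (ZMod 2))) :=
  stmt13_general n i hi1 hi2 hdvd C hCdef

end NETCayley
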